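/- Let 0 < a, 0 < b and a + b < 1, and set τ = 1 − a − b and ā = 1 − a, b̄ = 1 − b. Then (1/τ²)·∫_a^{b̄} ∫_a^{b̄} (min{u, v} − u·v)·Φ⁻¹(v)·Φ⁻¹(u) / (φ(Φ⁻¹(v))·φ(Φ⁻¹(u))) dv du = (1/(4τ²))·[ a·ā·(Φ⁻¹(a))⁴ + b·b̄·(Φ⁻¹(b̄))⁴ − 2·a·b·(Φ⁻¹(a))²·(Φ⁻¹(b̄))² − 2·τ·c₂·(a·(Φ⁻¹(a))² + b·(Φ⁻¹(b̄))²) − τ²·c₂² + τ·c₄ ]. -/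

import Mathlib

open Real MeasureTheory

/-- Standard normal density `φ(x) = (2π)^(−1/2) exp(−x²/2)`. -/
noncomputable def stdPDF (x : ℝ) : ℝ := (Real.sqrt (2 * Real.pi))⁻¹ * Real.exp (-x ^ 2 / 2)

/-- Standard normal cumulative distribution function `Φ(x) = ∫_{−∞}^x φ(u) du`. -/
noncomputable def stdCDF (x : ℝ) : ℝ := ∫ u in Set.Iic x, stdPDF u

/-- Mills hazard `h(γ) = φ(γ)/(1 − Φ(γ))`. -/
noncomputable def millsHazard (γ : ℝ) : ℝ := stdPDF γ / (1 - stdCDF γ)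

/-- The standard normal quantile function `Φ⁻¹`, the inverse of `Φ`. -/
noncomputable def stdQuantile : ℝ → ℝ := Function.invFun stdCDF

/-- Trimmed standard normal quantile moment
`c_k = (1/(1 − a − b)) ∫_a^{1−b} (Φ⁻¹(s))^k ds`. -/
noncomputable def trimMoment (a b : ℝ) (k : ℕ) : ℝ :=
  (1 - a - b)⁻¹ * ∫ s in a..(1 - b), (stdQuantile s) ^ k

/-!
With `G = (Φ⁻¹)² / 2` one has `G' = Φ⁻¹ / φ(Φ⁻¹)`, so the left-hand side is
`∫∫ (min u v - u v) G'(u) G'(v)` over `[a, 1 - b]²`, the Brownian bridge covariance tested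
against `G'`. For any such `G` on `[a, b]` this double integral is the variance of `G` evaluated at
a uniform variable clamped to `[a, b]`:
`a G(a)² + (1 - b) G(b)² + ∫ G² - (a G(a) + (1 - b) G(b) + ∫ G)²`.
Two integrations by parts show that the inner integral is `h(u) = -a G(a) + B u - ∫_a^u G`, with
`B` the mean inside the square; a third one, using `h' = B - G`, evaluates `∫ h G'`.
-/

open Set Filter Topology ProbabilityTheory

section

variable {G g : ℝ → ℝ} {a b : ℝ}

lemma integral_id_mul_deriv (hab : a ≤ b) (hG : ContinuousOn G (Icc a b))
    (hGg : ∀ t ∈ Ioo a b, HasDerivAt G (g t) t) (hg : IntervalIntegrable g volume a b) :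
    ∫ t in a..b, t * g t = b * G b - a * G a - ∫ t in a..b, G t := by
  have hparts := intervalIntegral.integral_mul_deriv_eq_deriv_mul_of_hasDerivAt (u := id)
    (u' := fun _ => 1) continuousOn_id (by rwa [uIcc_of_le hab]) (fun t _ => hasDerivAt_id t)
    (by rwa [min_eq_left hab, max_eq_right hab]) intervalIntegrable_const hg
  simpa using hparts

lemma integral_min_mul_deriv (hG : ContinuousOn G (Icc a b))
    (hGg : ∀ t ∈ Ioo a b, HasDerivAt G (g t) t) (hg : IntervalIntegrable g volume a b) {u : ℝ}
    (hu : u ∈ Icc a b) :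
    ∫ v in a..b, min u v * g v = u * G b - a * G a - ∫ v in a..u, G v := by
  have hab : a ≤ b := hu.1.trans hu.2
  have hg_left : IntervalIntegrable g volume a u := hg.mono_set (by
    rw [uIcc_of_le hu.1, uIcc_of_le hab]; exact Icc_subset_Icc_right hu.2)
  have hg_right : IntervalIntegrable g volume u b := hg.mono_set (by
    rw [uIcc_of_le hu.2, uIcc_of_le hab]; exact Icc_subset_Icc_left hu.1)
  have hleft : ∫ v in a..u, min u v * g v = u * G u - a * G a - ∫ v in a..u, G v := by
    rw [← integral_id_mul_deriv hu.1 (hG.mono (Icc_subset_Icc_right hu.2))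
      (fun t ht => hGg t ⟨ht.1, ht.2.trans_le hu.2⟩) hg_left]
    refine intervalIntegral.integral_congr fun v hv => ?_
    rw [uIcc_of_le hu.1] at hv
    simp only [min_eq_right hv.2]
  have hright : ∫ v in u..b, min u v * g v = u * (G b - G u) := by
    rw [← intervalIntegral.integral_eq_sub_of_hasDerivAt_of_le hu.2
      (hG.mono (Icc_subset_Icc_left hu.1)) (fun t ht => hGg t ⟨hu.1.trans_lt ht.1, ht.2⟩)
      hg_right, ← intervalIntegral.integral_const_mul]
    refine intervalIntegral.integral_congr fun v hv => ?_
    rw [uIcc_of_le hu.2] at hv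
    simp only [min_eq_left hv.1]
  have hmin : Continuous (fun v => min u v) := by fun_prop
  rw [← intervalIntegral.integral_add_adjacent_intervals
    (hg_left.continuousOn_mul hmin.continuousOn) (hg_right.continuousOn_mul hmin.continuousOn),
    hleft, hright]
  ring

lemma integral_min_sub_mul_mul_deriv (hG : ContinuousOn G (Icc a b))
    (hGg : ∀ t ∈ Ioo a b, HasDerivAt G (g t) t) (hg : IntervalIntegrable g volume a b) {u : ℝ}
    (hu : u ∈ Icc a b) :
    ∫ v in a..b, (min u v - u * v) * g v =
      -(a * G a) + (a * G a + (1 - b) * G b + ∫ t in a..b, G t) * u - ∫ t in a..u, G t := by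
  have hmin : ContinuousOn (fun v => min u v) (uIcc a b) := by fun_prop
  have hsplit : ∫ v in a..b, (min u v - u * v) * g v =
      (∫ v in a..b, min u v * g v) - u * ∫ v in a..b, v * g v := by
    have hmin_int : IntervalIntegrable (fun v => min u v * g v) volume a b :=
      hg.continuousOn_mul hmin
    have hid_int : IntervalIntegrable (fun v => u * (v * g v)) volume a b :=
      (hg.continuousOn_mul continuousOn_id).const_mul u
    rw [← intervalIntegral.integral_const_mul, ← intervalIntegral.integral_sub hmin_int hid_int]
    exact intervalIntegral.integral_congr fun v _ => by ring
  rw [hsplit, integral_min_mul_deriv hG hGg hg hu,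
    integral_id_mul_deriv (hu.1.trans hu.2) hG hGg hg]
  ring

theorem integral_integral_min_sub_mul_mul_deriv (hab : a ≤ b) (hG : ContinuousOn G (Icc a b))
    (hGg : ∀ t ∈ Ioo a b, HasDerivAt G (g t) t) (hg : IntervalIntegrable g volume a b) :
    ∫ u in a..b, ∫ v in a..b, (min u v - u * v) * g v * g u =
      a * G a ^ 2 + (1 - b) * G b ^ 2 + (∫ t in a..b, G t ^ 2)
        - (a * G a + (1 - b) * G b + ∫ t in a..b, G t) ^ 2 := by
  set B := a * G a + (1 - b) * G b + ∫ t in a..b, G t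
  set h : ℝ → ℝ := fun u => -(a * G a) + B * u - ∫ t in a..u, G t with h_def
  have hG_int : IntervalIntegrable G volume a b := hG.intervalIntegrable_of_Icc hab
  have hinner : ∫ u in a..b, ∫ v in a..b, (min u v - u * v) * g v * g u =
      ∫ u in a..b, h u * g u := by
    refine intervalIntegral.integral_congr fun u hu => ?_
    rw [uIcc_of_le hab] at hu
    simp only [intervalIntegral.integral_mul_const, integral_min_sub_mul_mul_deriv hG hGg hg hu,
      h_def]
    rfl
  have hh_cont : ContinuousOn h (uIcc a b) := by
    have hprimitive := intervalIntegral.continuousOn_primitive_interval' hG_int left_mem_uIcc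
    fun_prop
  have hh_deriv : ∀ u ∈ Ioo (min a b) (max a b), HasDerivAt h (B - G u) u := by
    intro u hu
    rw [min_eq_left hab, max_eq_right hab] at hu
    have hprimitive : HasDerivAt (fun u => ∫ t in a..u, G t) (G u) u :=
      intervalIntegral.integral_hasDerivAt_right (hG_int.mono_set (uIcc_subset_uIcc_left
        (by rw [uIcc_of_le hab]; exact Ioo_subset_Icc_self hu)))
        ((hG.mono Ioo_subset_Icc_self).stronglyMeasurableAtFilter isOpen_Ioo u hu)
        (hG.continuousAt (Icc_mem_nhds hu.1 hu.2))
    have hh := (((hasDerivAt_id u).const_mul B).const_add (-(a * G a))).sub hprimitive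
    rwa [mul_one] at hh
  rw [hinner, intervalIntegral.integral_mul_deriv_eq_deriv_mul_of_hasDerivAt hh_cont
    (by rwa [uIcc_of_le hab]) hh_deriv (by rwa [min_eq_left hab, max_eq_right hab])
    (intervalIntegrable_const.sub hG_int) hg]
  have hmoment : ∫ t in a..b, (B - G t) * G t = B * (∫ t in a..b, G t) - ∫ t in a..b, G t ^ 2 := by
    rw [← intervalIntegral.integral_const_mul, ← intervalIntegral.integral_sub
      (hG_int.const_mul B)
      ((hG.pow 2).intervalIntegrable_of_Icc hab : IntervalIntegrable (fun t => G t ^ 2) volume a b)]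
    exact intervalIntegral.integral_congr fun t _ => by ring
  simp only [h_def, hmoment, intervalIntegral.integral_same]
  ring

end

lemma stdPDF_eq_gaussianPDFReal : stdPDF = gaussianPDFReal 0 1 := by
  ext x
  simp [stdPDF, gaussianPDFReal]

lemma stdPDF_pos (x : ℝ) : 0 < stdPDF x := by
  rw [stdPDF_eq_gaussianPDFReal]
  exact gaussianPDFReal_pos 0 1 x one_ne_zero

lemma continuous_stdPDF : Continuous stdPDF := by
  unfold stdPDF
  fun_prop

lemma integrable_stdPDF : Integrable stdPDF := by
  rw [stdPDF_eq_gaussianPDFReal]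
  exact integrable_gaussianPDFReal 0 1

lemma stdCDF_eq_cdf_gaussianReal : stdCDF = cdf (gaussianReal 0 1) := by
  ext x
  rw [cdf_eq_real, measureReal_def, gaussianReal_apply_eq_integral 0 one_ne_zero,
    ENNReal.toReal_ofReal (setIntegral_nonneg measurableSet_Iic fun u _ =>
      gaussianPDFReal_nonneg 0 1 u), stdCDF, stdPDF_eq_gaussianPDFReal]

lemma stdCDF_sub_stdCDF (x y : ℝ) : stdCDF y - stdCDF x = ∫ u in x..y, stdPDF u :=
  intervalIntegral.integral_Iic_sub_Iic integrable_stdPDF.integrableOn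
    integrable_stdPDF.integrableOn

lemma hasDerivAt_stdCDF (x : ℝ) : HasDerivAt stdCDF (stdPDF x) x := by
  have hprimitive : HasDerivAt (fun y => stdCDF 0 + ∫ u in (0 : ℝ)..y, stdPDF u) (stdPDF x) x :=
    (intervalIntegral.integral_hasDerivAt_right integrable_stdPDF.intervalIntegrable
      (continuous_stdPDF.stronglyMeasurableAtFilter _ _) continuous_stdPDF.continuousAt).const_add _
  refine hprimitive.congr_of_eventuallyEq (Eventually.of_forall fun y => ?_)
  linarith [stdCDF_sub_stdCDF 0 y]

lemma continuous_stdCDF : Continuous stdCDF :=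
  continuous_iff_continuousAt.2 fun x => (hasDerivAt_stdCDF x).continuousAt

lemma strictMono_stdCDF : StrictMono stdCDF := fun x y hxy => by
  have hpos : 0 < ∫ u in x..y, stdPDF u :=
    intervalIntegral.intervalIntegral_pos_of_pos integrable_stdPDF.intervalIntegrable stdPDF_pos hxy
  linarith [stdCDF_sub_stdCDF x y]

lemma stdCDF_mem_Ioo (x : ℝ) : stdCDF x ∈ Ioo 0 1 := by
  have h0 : 0 ≤ stdCDF (x - 1) := by
    rw [stdCDF_eq_cdf_gaussianReal]; exact cdf_nonneg _ _
  have h1 : stdCDF (x + 1) ≤ 1 := by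
    rw [stdCDF_eq_cdf_gaussianReal]; exact cdf_le_one _ _
  exact ⟨h0.trans_lt (strictMono_stdCDF (by linarith)),
    (strictMono_stdCDF (by linarith)).trans_le h1⟩

lemma exists_stdCDF_eq {p : ℝ} (hp : p ∈ Ioo 0 1) : ∃ x, stdCDF x = p := by
  rw [stdCDF_eq_cdf_gaussianReal]
  obtain ⟨x, hx⟩ := ((tendsto_cdf_atBot _).eventually (eventually_lt_nhds hp.1)).exists
  obtain ⟨y, hy⟩ := ((tendsto_cdf_atTop _).eventually (eventually_gt_nhds hp.2)).exists
  exact mem_range_of_exists_le_of_exists_ge (stdCDF_eq_cdf_gaussianReal ▸ continuous_stdCDF)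
    ⟨x, hx.le⟩ ⟨y, hy.le⟩

lemma stdQuantile_stdCDF (x : ℝ) : stdQuantile (stdCDF x) = x :=
  Function.leftInverse_invFun strictMono_stdCDF.injective x

lemma stdCDF_stdQuantile {p : ℝ} (hp : p ∈ Ioo 0 1) : stdCDF (stdQuantile p) = p :=
  Function.invFun_eq (exists_stdCDF_eq hp)

lemma strictMonoOn_stdQuantile : StrictMonoOn stdQuantile (Ioo 0 1) := fun p hp q hq hpq =>
  strictMono_stdCDF.lt_iff_lt.1 (by rwa [stdCDF_stdQuantile hp, stdCDF_stdQuantile hq])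

lemma continuousAt_stdQuantile {p : ℝ} (hp : p ∈ Ioo 0 1) : ContinuousAt stdQuantile p := by
  refine strictMonoOn_stdQuantile.continuousAt_of_image_mem_nhds (isOpen_Ioo.mem_nhds hp) ?_
  have himage : stdQuantile '' Ioo 0 1 = univ :=
    eq_univ_of_forall fun x => ⟨stdCDF x, stdCDF_mem_Ioo x, stdQuantile_stdCDF x⟩
  rw [himage]
  exact univ_mem

lemma hasDerivAt_stdQuantile {p : ℝ} (hp : p ∈ Ioo 0 1) :
    HasDerivAt stdQuantile (stdPDF (stdQuantile p))⁻¹ p :=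
  (hasDerivAt_stdCDF _).of_local_left_inverse (continuousAt_stdQuantile hp) (stdPDF_pos _).ne'
    (eventually_of_mem (isOpen_Ioo.mem_nhds hp) fun _ => stdCDF_stdQuantile)


lemma continuousOn_stdQuantile : ContinuousOn stdQuantile (Ioo 0 1) :=
  fun _ hp => (continuousAt_stdQuantile hp).continuousWithinAt

lemma hasDerivAt_stdQuantile_sq_div_two {p : ℝ} (hp : p ∈ Ioo 0 1) :
    HasDerivAt (fun s => stdQuantile s ^ 2 / 2) (stdQuantile p / stdPDF (stdQuantile p)) p := by
  refine ((hasDerivAt_stdQuantile hp).fun_pow 2).div_const 2 |>.congr_deriv ?_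
  push_cast
  ring

/-- The double-integral expression for the third variance-covariance constant `c₃*`. -/
theorem cStar_three_formula (a b : ℝ) (ha : 0 < a) (hb : 0 < b) (hab : a + b < 1) :
    (1 - a - b)⁻¹ ^ 2 *
      ∫ u in a..(1 - b), ∫ v in a..(1 - b),
        (min u v - u * v) * stdQuantile v * stdQuantile u /
          (stdPDF (stdQuantile v) * stdPDF (stdQuantile u)) =
    (4 * (1 - a - b) ^ 2)⁻¹ *
      (a * (1 - a) * (stdQuantile a) ^ 4 + b * (1 - b) * (stdQuantile (1 - b)) ^ 4
        - 2 * a * b * (stdQuantile a) ^ 2 * (stdQuantile (1 - b)) ^ 2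
        - 2 * (1 - a - b) * trimMoment a b 2 *
            (a * (stdQuantile a) ^ 2 + b * (stdQuantile (1 - b)) ^ 2)
        - (1 - a - b) ^ 2 * (trimMoment a b 2) ^ 2
        + (1 - a - b) * trimMoment a b 4) := by
  have hτ : 1 - a - b ≠ 0 := by linarith
  have hsub : Icc a (1 - b) ⊆ Ioo 0 1 := fun t ht => ⟨ha.trans_le ht.1, ht.2.trans_lt (by linarith)⟩
  have hdensity : ContinuousOn (fun s => stdQuantile s / stdPDF (stdQuantile s)) (Icc a (1 - b)) :=
    (continuousOn_stdQuantile.div (continuous_stdPDF.comp_continuousOn continuousOn_stdQuantile)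
      fun s _ => (stdPDF_pos _).ne').mono hsub
  have hbridge := integral_integral_min_sub_mul_mul_deriv
    (G := fun s => stdQuantile s ^ 2 / 2) (by linarith)
    ((continuousOn_stdQuantile.mono hsub).pow 2 |>.div_const 2)
    (fun t ht => hasDerivAt_stdQuantile_sq_div_two (hsub (Ioo_subset_Icc_self ht)))
    (hdensity.intervalIntegrable_of_Icc (by linarith))
  have hintegrand : ∀ u v, (min u v - u * v) * stdQuantile v * stdQuantile u /
      (stdPDF (stdQuantile v) * stdPDF (stdQuantile u)) = (min u v - u * v) *
        (stdQuantile v / stdPDF (stdQuantile v)) * (stdQuantile u / stdPDF (stdQuantile u)) :=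
    fun u v => by ring
  have hmomentuare : ∀ s, (stdQuantile s ^ 2 / 2) ^ 2 = stdQuantile s ^ 4 / 4 := fun s => by ring
  simp only [hintegrand, hbridge, hmomentuare, intervalIntegral.integral_div, trimMoment]
  field_simp
  ring
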